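/- arXiv:1408.0844 — 4 statements merged into one kernel-verified Lean document; each statement's English description precedes it below -/
import Mathlib

section
/- For every integer m ≥ 1, the set of m-ultra numbers is a dense G_δ subset of ℝ (a countable intersection of dense open sets). -/
open Polynomial

/-- The primitive minimal polynomial over ℤ of a real number. -/
noncomputable def intMinpoly (α : ℝ) : Polynomial ℤ :=
  (IsLocalization.integerNormalization (nonZeroDivisors ℤ) (minpoly ℚ α)).primPart

/-- The height of an algebraic number: the maximum of the absolute values of the
coefficients of its primitive minimal polynomial over ℤ. -/
noncomputable def algHeight (α : ℝ) : ℕ :=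
  (intMinpoly α).support.sup fun i => ((intMinpoly α).coeff i).natAbs

/-- `α` is a real algebraic number of degree exactly `m`. -/
def DegreeExactly (m : ℕ) (α : ℝ) : Prop :=
  IsAlgebraic ℚ α ∧ (minpoly ℚ α).natDegree = m

/-- `exp^[3](x) = e^(e^(e^x))`. -/
noncomputable def expCube (x : ℝ) : ℝ := Real.exp (Real.exp (Real.exp x))

/-- `ξ` is an `m`-ultra number: there is a sequence `(α_n)_{n ≥ 1}` of pairwise distinct
real algebraic numbers of degree exactly `m` with
`0 < |ξ - α_n| < (exp^[3](H(α_n)))^{-n}` for all `n ≥ 1`. Here `a k` plays the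
role of `α_{k+1}`. -/
def IsMUltra (m : ℕ) (ξ : ℝ) : Prop :=
  ∃ a : ℕ → ℝ, Function.Injective a ∧
    ∀ n : ℕ, DegreeExactly m (a n) ∧ 0 < |ξ - a n| ∧
      |ξ - a n| < (expCube (algHeight (a n)))⁻¹ ^ (n + 1)

/-- A function `f : ℝ → ℝ` is transcendental if the only complex two-variable polynomial
`P` with `P (x, f x) = 0` for all real `x` is the zero polynomial. -/
def TranscendentalFun (f : ℝ → ℝ) : Prop :=
  ∀ P : MvPolynomial (Fin 2) ℂ,
    (∀ x : ℝ, MvPolynomial.eval ![(x : ℂ), (f x : ℂ)] P = 0) → P = 0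


/-!
For each `n`, the reals `ξ` with `0 < |ξ - α| < exp^[3](H(α))^{-(n+1)}` for some `α` of degree `m`
form an open set, and it is dense because the numbers `q + 2^{1/m}` (`q ∈ ℚ`) have degree `m`
(Eisenstein) and are dense. The `m`-ultra numbers are exactly the intersection of these sets:
since `exp^[3] ≥ 2`, approximants chosen in the `n`-th set converge to `ξ`, and the infinitary
Erdős–Szekeres theorem extracts a subsequence with strictly decreasing distances to `ξ`, hence
pairwise distinct terms. Baire's theorem concludes.
-/

open Filter Topology

theorem Filter.Tendsto.exists_strictMono_strictAnti_comp {α : Type*} [LinearOrder α]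
    [TopologicalSpace α] [ClosedIciTopology α] {u : ℕ → α} {a : α}
    (hu : Tendsto u atTop (𝓝 a)) (ha : ∀ n, a < u n) :
    ∃ φ : ℕ → ℕ, StrictMono φ ∧ StrictAnti (u ∘ φ) := by
  obtain ⟨g, hanti | hmono⟩ := exists_increasing_or_nonincreasing_subseq (· > ·) u
  · exact ⟨g, g.strictMono, hanti⟩
  · have hle : ∀ n, u (g 0) ≤ u (g n) := fun n =>
      n.eq_zero_or_pos.elim (fun h => h ▸ le_rfl) fun hn => not_lt.1 (hmono 0 n hn)
    have : u (g 0) ≤ a :=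
      ge_of_tendsto (hu.comp g.strictMono.tendsto_atTop) (Eventually.of_forall hle)
    exact absurd (ha (g 0)) this.not_gt

theorem Dense.biUnion_sdiff_singleton {X : Type*} [TopologicalSpace X]
    [∀ x : X, (𝓝[≠] x).NeBot] {s : Set X} (hs : Dense s) {U : X → Set X}
    (hU : ∀ x ∈ s, U x ∈ 𝓝 x) : Dense (⋃ x ∈ s, U x \ {x}) := by
  refine dense_closure.mp (hs.mono fun x hxs => ?_)
  have hx : x ∈ closure (U x \ {x}) := mem_closure_iff_nhdsWithin_neBot.2 <|
    (inferInstance : (𝓝[≠] x).NeBot).mono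
      (nhdsWithin_le_of_mem (sdiff_mem_nhdsWithin_compl (hU x hxs) _))
  exact closure_mono (Set.subset_biUnion_of_mem (u := fun x => U x \ {x}) hxs) hx

theorem irreducible_X_pow_sub_C_natCast_of_prime {p m : ℕ} (hp : p.Prime) (hm : m ≠ 0) :
    Irreducible (X ^ m - C (p : ℤ)) := by
  have hmonic : (X ^ m - C (p : ℤ)).Monic := monic_X_pow_sub_C _ hm
  have hdeg : (X ^ m - C (p : ℤ)).natDegree = m := natDegree_X_pow_sub_C
  have hprime : (Ideal.span {(p : ℤ)}).IsPrime :=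
    (Ideal.span_singleton_prime (by exact_mod_cast hp.ne_zero)).2 (Nat.prime_iff_prime_int.1 hp)
  refine IsEisensteinAt.irreducible ?_ hprime hmonic.isPrimitive
    (hdeg.symm ▸ Nat.pos_of_ne_zero hm)
  refine hmonic.isEisensteinAt_of_mem_of_notMem hprime.ne_top (fun {n} hn => ?_) ?_
  · rw [hdeg] at hn
    rw [Ideal.mem_span_singleton]
    rcases eq_or_ne n 0 with rfl | hn0
    · simp [hm.symm]
    · simp [coeff_X_pow, hn.ne, hn0]
  · rw [Ideal.span_singleton_pow, Ideal.mem_span_singleton]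
    simp only [coeff_sub, coeff_X_pow, hm.symm, if_false, coeff_C_zero, zero_sub, dvd_neg]
    intro h
    have : p ^ 2 ∣ p := by exact_mod_cast h
    exact absurd (Nat.le_of_dvd hp.pos this) (by nlinarith [hp.two_le])

theorem minpoly_natCast_rpow_inv {p m : ℕ} (hp : p.Prime) (hm : m ≠ 0) :
    minpoly ℚ ((p : ℝ) ^ (m : ℝ)⁻¹) = X ^ m - C (p : ℚ) := by
  have hmonic : (X ^ m - C (p : ℤ)).Monic := monic_X_pow_sub_C _ hm
  have hirr : Irreducible (X ^ m - C (p : ℚ)) := by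
    simpa using (hmonic.irreducible_iff_irreducible_map_fraction_map (K := ℚ)).1
      (irreducible_X_pow_sub_C_natCast_of_prime hp hm)
  refine (minpoly.eq_of_irreducible_of_monic hirr ?_ (monic_X_pow_sub_C _ hm)).symm
  simp [Real.rpow_inv_natCast_pow (Nat.cast_nonneg p) hm]

theorem degreeExactly_ratCast_add_natCast_rpow_inv {p m : ℕ} (hp : p.Prime) (hm : m ≠ 0)
    (q : ℚ) : DegreeExactly m (q + (p : ℝ) ^ (m : ℝ)⁻¹) := by
  have hint : IsIntegral ℚ ((p : ℝ) ^ (m : ℝ)⁻¹) := by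
    refine ⟨X ^ m - C (p : ℚ), monic_X_pow_sub_C _ hm, ?_⟩
    simp [Real.rpow_inv_natCast_pow (Nat.cast_nonneg p) hm]
  refine ⟨(isIntegral_algebraMap.add hint).isAlgebraic, ?_⟩
  rw [add_comm, ← eq_ratCast (algebraMap ℚ ℝ), minpoly.add_algebraMap, natDegree_comp,
    natDegree_X_sub_C, mul_one, minpoly_natCast_rpow_inv hp hm, natDegree_X_pow_sub_C]

theorem dense_setOf_degreeExactly {m : ℕ} (hm : m ≠ 0) : Dense {α : ℝ | DegreeExactly m α} := by
  have hrange : DenseRange fun q : ℚ => (q : ℝ) + (2 : ℝ) ^ (m : ℝ)⁻¹ :=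
    (Homeomorph.addRight _).surjective.denseRange.comp Rat.denseRange_cast
      (continuous_add_const _)
  exact hrange.mono (Set.range_subset_iff.2 fun q =>
    by exact_mod_cast degreeExactly_ratCast_add_natCast_rpow_inv Nat.prime_two hm q)

theorem two_le_expCube (x : ℝ) : 2 ≤ expCube x := by
  have h1 : 1 ≤ Real.exp (Real.exp x) := Real.one_le_exp (Real.exp_pos x).le
  have h2 := Real.add_one_le_exp (Real.exp (Real.exp x))
  unfold expCube
  linarith

def ultraApproxSet (m n : ℕ) : Set ℝ :=
  ⋃ α ∈ {α : ℝ | DegreeExactly m α}, Metric.ball α ((expCube (algHeight α))⁻¹ ^ (n + 1)) \ {α}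

theorem mem_ultraApproxSet {m n : ℕ} {ξ : ℝ} :
    ξ ∈ ultraApproxSet m n ↔ ∃ α, DegreeExactly m α ∧ 0 < |ξ - α| ∧
      |ξ - α| < (expCube (algHeight α))⁻¹ ^ (n + 1) := by
  simp only [ultraApproxSet, Set.mem_iUnion, Set.mem_sdiff, Metric.mem_ball, Real.dist_eq,
    Set.mem_singleton_iff, abs_sub_pos, exists_prop]
  grind

theorem isOpen_ultraApproxSet (m n : ℕ) : IsOpen (ultraApproxSet m n) :=
  isOpen_biUnion fun _ _ => Metric.isOpen_ball.sdiff isClosed_singleton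

theorem dense_ultraApproxSet {m : ℕ} (hm : m ≠ 0) (n : ℕ) : Dense (ultraApproxSet m n) :=
  (dense_setOf_degreeExactly hm).biUnion_sdiff_singleton fun α _ =>
    Metric.ball_mem_nhds α (pow_pos (inv_pos.2 (Real.exp_pos _)) _)

theorem setOf_isMUltra_eq_iInter (m : ℕ) :
    {ξ : ℝ | IsMUltra m ξ} = ⋂ n, ultraApproxSet m n := by
  ext ξ
  simp only [Set.mem_ofPred_eq, Set.mem_iInter, mem_ultraApproxSet]
  refine ⟨fun ⟨a, _, ha⟩ n => ⟨a n, ha n⟩, fun h => ?_⟩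
  choose b hb using h
  set c : ℕ → ℝ := fun n => (expCube (algHeight (b n)))⁻¹
  have hc_pos : ∀ n, 0 < c n := fun n => inv_pos.2 (Real.exp_pos _)
  have hc_le : ∀ n, c n ≤ 2⁻¹ := fun n => inv_anti₀ two_pos (two_le_expCube _)
  have hdist : Tendsto (fun n => |ξ - b n|) atTop (𝓝 0) :=
    squeeze_zero (fun n => (hb n).2.1.le)
      (fun n => (hb n).2.2.le.trans (pow_le_pow_left₀ (hc_pos n).le (hc_le n) _))
      ((tendsto_pow_atTop_nhds_zero_of_lt_one (by norm_num) (by norm_num)).comp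
        (tendsto_add_atTop_nat 1))
  obtain ⟨φ, hφ, hanti⟩ := hdist.exists_strictMono_strictAnti_comp fun n => (hb n).2.1
  refine ⟨b ∘ φ, fun i j hij => hanti.injective (congrArg (fun x => |ξ - x|) hij),
    fun k => ⟨(hb (φ k)).1, (hb (φ k)).2.1, (hb (φ k)).2.2.trans_le ?_⟩⟩
  -- `b (φ k)` was chosen at precision `φ k + 1 ≥ k + 1`
  exact pow_le_pow_of_le_one (hc_pos _).le ((hc_le _).trans (by norm_num))
    (Nat.succ_le_succ (hφ.id_le k))

/-- The set of `m`-ultra numbers is a dense `G_δ` subset of `ℝ`. -/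
theorem stmt_3 (m : ℕ) (hm : 1 ≤ m) :
    Dense {ξ : ℝ | IsMUltra m ξ} ∧ IsGδ {ξ : ℝ | IsMUltra m ξ} := by
  rw [setOf_isMUltra_eq_iInter]
  exact ⟨dense_iInter_of_isOpen (isOpen_ultraApproxSet m) (dense_ultraApproxSet (by omega)),
    .iInter_of_isOpen (isOpen_ultraApproxSet m)⟩
end

section
/- For every integer m ≥ 1, every real number can be written as the sum of two m-ultra numbers. -/
/-!
The approximation condition only asks for a positive radius around each approximant, so with
the approximants `2^(1/m) + q`, `q ∈ ℚ` (all of degree `m`, by Eisenstein), the `m`-ultra numbers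
contain a countable intersection of dense open sets: they form a residual subset of `ℝ`. By
Baire, so does `{ξ | x - ξ is m-ultra}`, and any `ξ` in both sets gives `x = ξ + (x - ξ)`.
-/

open Polynomial

open Filter Topology Set Metric

theorem irreducible_X_pow_sub_C_of_prime_int {p : ℤ} (hp : Prime p) {m : ℕ} (hm : 0 < m) :
    Irreducible (X ^ m - C p : ℤ[X]) := by
  have hmonic : (X ^ m - C p : ℤ[X]).Monic := monic_X_pow_sub_C p hm.ne'
  have hdeg : (X ^ m - C p : ℤ[X]).natDegree = m := natDegree_X_pow_sub_C
  have hspan : Ideal.span {p} ≠ ⊤ := by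
    rw [Ne, Ideal.span_singleton_eq_top]
    exact hp.not_isUnit
  refine (hmonic.isEisensteinAt_of_mem_of_notMem hspan (fun {n} hn => ?_) ?_).irreducible
    ((Ideal.span_singleton_prime hp.ne_zero).2 hp) hmonic.isPrimitive (hdeg.symm ▸ hm)
  · rw [hdeg] at hn
    rw [coeff_sub, coeff_X_pow, if_neg hn.ne, coeff_C, zero_sub, Ideal.neg_mem_iff]
    split_ifs
    · exact Ideal.mem_span_singleton_self p
    · exact zero_mem _
  · rw [coeff_sub, coeff_X_pow, if_neg hm.ne, coeff_C_zero, zero_sub, Ideal.neg_mem_iff,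
      Ideal.span_singleton_pow, Ideal.mem_span_singleton]
    exact fun h => hp.not_isUnit (isUnit_of_dvd_one ((mul_dvd_mul_iff_left hp.ne_zero).1
      (by simpa [sq] using h)))

theorem minpoly_rpow_inv {p : ℕ} (hp : p.Prime) {m : ℕ} (hm : 0 < m) :
    minpoly ℚ ((p : ℝ) ^ (m⁻¹ : ℝ)) = X ^ m - C (p : ℚ) := by
  have hirr : Irreducible (X ^ m - C (p : ℚ)) := by
    simpa using ((monic_X_pow_sub_C (p : ℤ) hm.ne').irreducible_iff_irreducible_map_fraction_map
      (K := ℚ)).1 (irreducible_X_pow_sub_C_of_prime_int (Nat.prime_iff_prime_int.1 hp) hm)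
  refine (minpoly.eq_of_irreducible_of_monic hirr ?_ (monic_X_pow_sub_C _ hm.ne')).symm
  simp [← Real.rpow_natCast, ← Real.rpow_mul (Nat.cast_nonneg p), hm.ne']

theorem degreeExactly_rpow_inv {p : ℕ} (hp : p.Prime) {m : ℕ} (hm : 0 < m) :
    DegreeExactly m ((p : ℝ) ^ (m⁻¹ : ℝ)) := by
  have hmin := minpoly_rpow_inv hp hm
  refine ⟨⟨X ^ m - C (p : ℚ), X_pow_sub_C_ne_zero hm _, ?_⟩, hmin ▸ natDegree_X_pow_sub_C⟩
  rw [← hmin]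
  exact minpoly.aeval ℚ _

theorem DegreeExactly.add_rat {m : ℕ} {α : ℝ} (hα : DegreeExactly m α) (q : ℚ) :
    DegreeExactly m (α + q) := by
  rw [← eq_ratCast (algebraMap ℚ ℝ)]
  refine ⟨(hα.1.isIntegral.add isIntegral_algebraMap).isAlgebraic, ?_⟩
  rw [minpoly.add_algebraMap, natDegree_comp, natDegree_X_sub_C, mul_one, hα.2]

theorem DenseRange.dense_image_Ici {X : Type*} [TopologicalSpace X] [T1Space X]
    [∀ x : X, (𝓝[≠] x).NeBot] {β : ℕ → X} (hβ : DenseRange β) (K : ℕ) : Dense (β '' Ici K) := by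
  refine (hβ.sdiff_finite ((finite_Iio K).image β)).mono ?_
  rintro _ ⟨⟨k, rfl⟩, hK⟩
  exact ⟨k, mem_Ici.2 (not_lt.1 fun h => hK ⟨k, h, rfl⟩), rfl⟩

theorem mem_closure_sdiff_singleton_of_mem_nhds {X : Type*} [TopologicalSpace X] {x : X}
    [(𝓝[≠] x).NeBot] {s : Set X} (hs : s ∈ 𝓝 x) : x ∈ closure (s \ {x}) :=
  mem_closure_ne_iff_frequently_within.2 <|
    Eventually.frequently (p := (· ∈ s)) (mem_nhdsWithin_of_mem_nhds hs)

theorem eventually_residual_exists_strictMono_dist_lt {X : Type*} [MetricSpace X] [BaireSpace X]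
    [∀ x : X, (𝓝[≠] x).NeBot] {β : ℕ → X} (hβ : DenseRange β) {r : ℕ → ℕ → ℝ}
    (hr : ∀ n k, 0 < r n k) :
    ∀ᶠ ξ in residual X, ∃ φ : ℕ → ℕ, StrictMono φ ∧
      ∀ n, ξ ≠ β (φ n) ∧ dist ξ (β (φ n)) < r n (φ n) := by
  -- The lower bound `K` on the index is what lets the extracted indices increase strictly.
  set U : ℕ × ℕ → Set X := fun p => ⋃ k ≥ p.2, ball (β k) (r p.1 k) \ {β k}
  have hU_open : ∀ p, IsOpen (U p) := fun p =>
    isOpen_biUnion fun k _ => isOpen_ball.sdiff isClosed_singleton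
  have hU_dense : ∀ p, Dense (U p) := fun p =>
    dense_closure.1 <| (hβ.dense_image_Ici p.2).mono <| by
      rintro _ ⟨k, hk, rfl⟩
      exact closure_mono (subset_biUnion_of_mem (u := fun k => ball (β k) (r p.1 k) \ {β k}) hk)
        (mem_closure_sdiff_singleton_of_mem_nhds (ball_mem_nhds _ (hr p.1 k)))
  refine eventually_residual.2 ⟨⋂ p, U p, .iInter fun p => (hU_open p).isGδ,
    dense_iInter_of_isOpen hU_open hU_dense, fun ξ hξ => ?_⟩
  refine extraction_forall_of_frequently (P := fun n k => ξ ≠ β k ∧ dist ξ (β k) < r n k)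
    fun n => frequently_atTop.2 fun K => ?_
  obtain ⟨k, hk, hξk, hne⟩ := mem_iUnion₂.1 (mem_iInter.1 hξ (n, K))
  exact ⟨k, hk, hne, hξk⟩

theorem eventually_residual_isMUltra {m : ℕ} (hm : 0 < m) : ∀ᶠ ξ in residual ℝ, IsMUltra m ξ := by
  set e : ℕ ≃ ℚ := (Denumerable.eqv ℚ).symm
  set α : ℝ := (2 : ℝ) ^ (m⁻¹ : ℝ)
  set β : ℕ → ℝ := fun k => α + e k
  have hβ_inj : Function.Injective β := fun k l h =>
    e.injective (Rat.cast_injective (add_left_cancel h))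
  have hβ_dense : DenseRange β :=
    (Homeomorph.addLeft α).surjective.denseRange.comp
      (Rat.denseRange_cast.comp e.surjective.denseRange Rat.continuous_coe_real)
      (Homeomorph.addLeft α).continuous
  have hr : ∀ n k, 0 < (expCube (algHeight (β k)))⁻¹ ^ (n + 1) := fun n k =>
    pow_pos (inv_pos.2 (Real.exp_pos _)) _
  filter_upwards [eventually_residual_exists_strictMono_dist_lt hβ_dense hr] with ξ ⟨φ, hφ, hξ⟩
  exact ⟨β ∘ φ, hβ_inj.comp hφ.injective, fun n =>
    ⟨(degreeExactly_rpow_inv Nat.prime_two hm).add_rat _, abs_pos.2 (sub_ne_zero.2 (hξ n).1),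
      (hξ n).2⟩⟩

/-- Every real number is the sum of two `m`-ultra numbers. -/
theorem stmt_5 (m : ℕ) (hm : 1 ≤ m) (x : ℝ) :
    ∃ a b : ℝ, IsMUltra m a ∧ IsMUltra m b ∧ x = a + b := by
  have hultra := eventually_residual_isMUltra hm
  have hsub : ∀ᶠ a in residual ℝ, IsMUltra m (x - a) := by
    rw [← (Homeomorph.subLeft x).residual_map_eq] at hultra
    exact eventually_map.1 hultra
  obtain ⟨a, ha, hb⟩ := (dense_of_mem_residual (hultra.and hsub)).nonempty
  exact ⟨a, x - a, ha, hb, by ring⟩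
end

section
/- Let f : ℝ → ℝ be a periodic function (i.e., there exists t ≠ 0 with f(x + t) = f(x) for all x ∈ ℝ) whose range is infinite. Then f is transcendental. -/
lemma eval_aeval_aux (g : Fin 2 → Polynomial ℂ) (z : ℂ) (P : MvPolynomial (Fin 2) ℂ) :
    Polynomial.eval z (MvPolynomial.aeval g P)
      = MvPolynomial.eval (fun i => Polynomial.eval z (g i)) P := by
  induction P using MvPolynomial.induction_on with
  | C a => simp
  | add p q hp hq => simp [hp, hq]
  | mul_X p i hp => simp [hp]

/-- A periodic function `f : ℝ → ℝ` with infinite range is transcendental. -/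
theorem stmt_13 (f : ℝ → ℝ) (t : ℝ) (ht : t ≠ 0) (hper : ∀ x : ℝ, f (x + t) = f x)
    (hinf : (Set.range f).Infinite) : TranscendentalFun f := by
  intro P h
  -- periodicity for natural multiples
  have hpern : ∀ (x : ℝ) (n : ℕ), f (x + n * t) = f x := by
    intro x n
    induction n with
    | zero => simp
    | succ n ih =>
      have : x + (n + 1 : ℕ) * t = (x + n * t) + t := by push_cast; ring
      rw [this, hper, ih]
  -- Step 1: for every c in the range of f, P(x, c) = 0 for all complex x
  have step1 : ∀ c ∈ Set.range f, ∀ z : ℂ, MvPolynomial.eval ![z, (c : ℂ)] P = 0 := by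
    rintro c ⟨x0, rfl⟩ z
    set Q : Polynomial ℂ := MvPolynomial.aeval ![Polynomial.X, Polynomial.C ((f x0 : ℝ) : ℂ)] P
      with hQ
    have hevalQ : ∀ w : ℂ, Polynomial.eval w Q = MvPolynomial.eval ![w, (f x0 : ℂ)] P := by
      intro w
      rw [hQ, eval_aeval_aux]
      have hfun : (fun i => Polynomial.eval w (![Polynomial.X, Polynomial.C ((f x0 : ℝ) : ℂ)] i))
          = ![w, (f x0 : ℂ)] := by funext i; fin_cases i <;> simp
      rw [hfun]
    have hQZero : Q = 0 := by
      apply Polynomial.eq_zero_of_infinite_isRoot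
      apply Set.infinite_of_injective_forall_mem
        (f := fun n : ℕ => ((x0 + n * t : ℝ) : ℂ))
      · intro m n hmn
        simp only at hmn
        have h1 : (x0 + m * t : ℝ) = x0 + n * t := by exact_mod_cast hmn
        have h2 : (m : ℝ) * t = n * t := by linarith
        have h3 : (m : ℝ) = n := mul_right_cancel₀ ht h2
        exact_mod_cast h3
      · intro n
        simp only [Set.mem_setOf_eq, Polynomial.IsRoot, hevalQ]
        have := h (x0 + n * t)
        rwa [hpern x0 n] at this
    have := hevalQ z
    rw [hQZero] at this
    simpa using this.symm
  -- Step 2: for every complex a and b with b in the (complexified) range, etc.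
  have step2 : ∀ z w : ℂ, MvPolynomial.eval ![z, w] P = 0 := by
    intro z w
    set S : Polynomial ℂ := MvPolynomial.aeval ![Polynomial.C z, Polynomial.X] P with hS
    have hevalS : ∀ w : ℂ, Polynomial.eval w S = MvPolynomial.eval ![z, w] P := by
      intro w
      rw [hS, eval_aeval_aux]
      have hfun : (fun i => Polynomial.eval w (![Polynomial.C z, Polynomial.X] i))
          = ![z, w] := by funext i; fin_cases i <;> simp
      rw [hfun]
    have hSZero : S = 0 := by
      apply Polynomial.eq_zero_of_infinite_isRoot
      apply Set.Infinite.mono (s := (fun r : ℝ => (r : ℂ)) '' (Set.range f))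
      · rintro _ ⟨c, hc, rfl⟩
        simp only [Set.mem_setOf_eq, Polynomial.IsRoot, hevalS]
        exact step1 c hc z
      · exact hinf.image (Set.injOn_of_injective Complex.ofReal_injective)
    have := hevalS w
    rw [hSZero] at this
    simpa using this.symm
  -- Conclude
  have : ∀ v : Fin 2 → ℂ, MvPolynomial.eval v P = MvPolynomial.eval v 0 := by
    intro v
    have hv : v = ![v 0, v 1] := by funext i; fin_cases i <;> simp
    rw [hv, step2]
    simp
  exact MvPolynomial.funext this
end

section
/- Let (b_n)_{n≥1} be a sequence of real numbers in [−1, 1] and let (c_n)_{n≥1} be a sequence of complex numbers with |c_n| < 1/n^n for all n ≥ 1. Then the series g(y) = Σ_{n=1}^{∞} c_n · ∏_{k=1}^{n} sin(y − b_k) converges for every y ∈ ℂ, converges uniformly on every bounded subset of ℂ, and the resulting function g : ℂ → ℂ is entire (analytic on all of ℂ). -/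
/-!
Since `‖sin z‖ ≤ exp ‖z‖` and `n! ≤ nⁿ`, on the ball `‖y‖ ≤ R` the `n`-th term is bounded by
`exp (R + 1) ^ (n + 1) / (n + 1)!`, a summable majorant independent of `y`. The Weierstrass
M-test then gives uniform convergence on bounded sets, and a locally uniform limit of entire
functions is entire.
-/

open Finset

namespace Complex

theorem norm_sin_le_exp_norm (z : ℂ) : ‖sin z‖ ≤ Real.exp ‖z‖ := by
  calc ‖sin z‖ = ‖exp (-z * I) - exp (z * I)‖ / 2 := by simp [sin]
    _ ≤ (Real.exp ‖-z * I‖ + Real.exp ‖z * I‖) / 2 := by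
      gcongr
      exact (norm_sub_le _ _).trans (add_le_add (norm_exp_le_exp_norm _) (norm_exp_le_exp_norm _))
    _ = Real.exp ‖z‖ := by simp

theorem norm_prod_sin_sub_le {ι : Type*} (s : Finset ι) (b : ι → ℂ) {B R : ℝ}
    (hb : ∀ k ∈ s, ‖b k‖ ≤ B) {y : ℂ} (hy : ‖y‖ ≤ R) :
    ‖∏ k ∈ s, sin (y - b k)‖ ≤ Real.exp (R + B) ^ s.card := by
  rw [norm_prod, ← prod_const]
  gcongr with k hk
  exact (norm_sin_le_exp_norm _).trans <| Real.exp_le_exp.2 <|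
    (norm_sub_le _ _).trans (add_le_add hy (hb k hk))

end Complex

section MajorizedSeries

variable {E F : Type*} [NormedAddCommGroup F] [CompleteSpace F]

theorem summable_of_norm_le_majorant [SeminormedAddCommGroup E] {f : ℕ → E → F}
    {u : ℝ → ℕ → ℝ} (hu : ∀ R, Summable (u R)) (hf : ∀ R n x, ‖x‖ ≤ R → ‖f n x‖ ≤ u R n)
    (x : E) : Summable fun n => f n x :=
  .of_norm_bounded (hu ‖x‖) fun n => hf _ n x le_rfl

theorem tendstoUniformlyOn_tsum_of_norm_le_majorant [SeminormedAddCommGroup E]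
    {f : ℕ → E → F} {u : ℝ → ℕ → ℝ} (hu : ∀ R, Summable (u R))
    (hf : ∀ R n x, ‖x‖ ≤ R → ‖f n x‖ ≤ u R n) {s : Set E} (hs : Bornology.IsBounded s) :
    TendstoUniformlyOn (fun N x => ∑ n ∈ range N, f n x) (fun x => ∑' n, f n x) .atTop s := by
  obtain ⟨R, hR⟩ := hs.subset_closedBall 0
  exact tendstoUniformlyOn_tsum_nat (hu R) fun n x hx => hf R n x (by simpa using hR hx)

theorem differentiable_tsum_of_norm_le_majorant [NormedSpace ℂ F] {f : ℕ → ℂ → F}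
    {u : ℝ → ℕ → ℝ} (hu : ∀ R, Summable (u R)) (hf : ∀ R n x, ‖x‖ ≤ R → ‖f n x‖ ≤ u R n)
    (hd : ∀ n, Differentiable ℂ (f n)) : Differentiable ℂ fun x => ∑' n, f n x := by
  intro x
  have hball : DifferentiableOn ℂ (fun x => ∑' n, f n x) (Metric.ball x 1) :=
    Complex.differentiableOn_tsum_of_summable_norm (hu (‖x‖ + 1))
      (fun n => (hd n).differentiableOn) Metric.isOpen_ball fun n w hw =>
        hf _ n w <| (norm_le_norm_add_norm_sub' w x).trans (by
          rw [Metric.mem_ball, dist_eq_norm] at hw; linarith)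
  exact hball.differentiableAt (Metric.ball_mem_nhds x one_pos)

end MajorizedSeries

theorem norm_mul_prod_sin_sub_le (b : ℕ → ℝ) (hb : ∀ n, b n ∈ Set.Icc (-1 : ℝ) 1)
    (c : ℕ → ℂ) (hc : ∀ n : ℕ, ‖c n‖ ≤ 1 / (n + 1 : ℝ) ^ (n + 1)) {R : ℝ} (n : ℕ) {y : ℂ}
    (hy : ‖y‖ ≤ R) :
    ‖c n * ∏ k ∈ range (n + 1), Complex.sin (y - b k)‖ ≤
      Real.exp (R + 1) ^ (n + 1) / (n + 1).factorial := by
  have hprod := Complex.norm_prod_sin_sub_le (range (n + 1)) (fun k => (b k : ℂ))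
    (fun k _ => by simpa [abs_le] using hb k) hy
  rw [card_range] at hprod
  have hfact : ((n + 1).factorial : ℝ) ≤ (n + 1 : ℝ) ^ (n + 1) := by
    exact_mod_cast Nat.factorial_le_pow (n + 1)
  calc ‖c n * ∏ k ∈ range (n + 1), Complex.sin (y - b k)‖
      ≤ 1 / (n + 1 : ℝ) ^ (n + 1) * Real.exp (R + 1) ^ (n + 1) := by
        rw [norm_mul]; gcongr; exact hc n
    _ ≤ 1 / (n + 1).factorial * Real.exp (R + 1) ^ (n + 1) := by gcongr
    _ = Real.exp (R + 1) ^ (n + 1) / (n + 1).factorial := by ring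

open Finset in
/-- Let `(b_n)_{n≥1}` be reals in `[-1, 1]` and `(c_n)_{n≥1}` complex numbers with
`|c_n| < 1/nⁿ`. Then `g(y) = Σ_{n≥1} c_n ∏_{k=1}^n sin (y - b_k)` converges for every
`y : ℂ`, converges uniformly on every bounded subset of `ℂ`, and `g` is entire.
Here the index `n : ℕ` plays the role of `n + 1 ≥ 1`, so `b k` is `b_{k+1}` and
`c n` is `c_{n+1}`. -/
theorem stmt_16 (b : ℕ → ℝ) (hb : ∀ n, b n ∈ Set.Icc (-1 : ℝ) 1)
    (c : ℕ → ℂ) (hc : ∀ n : ℕ, ‖c n‖ < 1 / (n + 1 : ℝ) ^ (n + 1)) :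
    (∀ y : ℂ, Summable fun n : ℕ =>
        c n * ∏ k ∈ range (n + 1), Complex.sin (y - (b k : ℂ))) ∧
    (∀ s : Set ℂ, Bornology.IsBounded s →
      TendstoUniformlyOn
        (fun N : ℕ => fun y : ℂ =>
          ∑ n ∈ range N, c n * ∏ k ∈ range (n + 1), Complex.sin (y - (b k : ℂ)))
        (fun y : ℂ => ∑' n : ℕ, c n * ∏ k ∈ range (n + 1), Complex.sin (y - (b k : ℂ)))
        Filter.atTop s) ∧
    (∀ y : ℂ, AnalyticAt ℂ
      (fun y : ℂ => ∑' n : ℕ, c n * ∏ k ∈ range (n + 1), Complex.sin (y - (b k : ℂ))) y) := by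
  have hu (R : ℝ) : Summable fun n : ℕ => Real.exp (R + 1) ^ (n + 1) / (n + 1).factorial :=
    (summable_nat_add_iff 1).2 (Real.summable_pow_div_factorial _)
  have hf (R : ℝ) (n : ℕ) (y : ℂ) (hy : ‖y‖ ≤ R) :=
    norm_mul_prod_sin_sub_le b hb c (fun n => (hc n).le) n hy
  have hd (n : ℕ) : Differentiable ℂ fun y =>
      c n * ∏ k ∈ range (n + 1), Complex.sin (y - (b k : ℂ)) := by
    fun_prop
  exact ⟨summable_of_norm_le_majorant hu hf,
    fun s => tendstoUniformlyOn_tsum_of_norm_le_majorant hu hf,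
    (differentiable_tsum_of_norm_le_majorant hu hf hd).analyticAt⟩
end
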